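/- Let (X, Y, A) be jointly distributed with Y, A ∈ {0,1}, let f : X → Z be a feature map, and let H ⊆ 2^Z contain all measurable binary classifiers from Z to {0,1}. Then for every h ∈ H, Util₀(h ∘ f) + Util₁(h ∘ f) + Priv_A(H ∘ f) ≤ 3 − (1/3) D_JS(D₀^Y, D₁^Y), where D_a^Y is the conditional distribution of Y given A = a. -/

import Mathlib

open MeasureTheory ProbabilityTheory
open scoped ENNReal

/-- Kullback–Leibler divergence (base-2 logarithm) between two mass functions,
with the usual conventions `0 log 0 = 0`. -/
noncomputable def klFun {α : Type*} (P Q : α → ℝ≥0∞) : ℝ :=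
  ∑' a, (P a).toReal * Real.logb 2 ((P a).toReal / (Q a).toReal)

/-- Jensen–Shannon divergence (base-2 logarithm):
`D_JS(P, Q) = (1/2) D_KL(P ‖ M) + (1/2) D_KL(Q ‖ M)` where `M = (P + Q)/2`. -/
noncomputable def jsFun {α : Type*} (P Q : α → ℝ≥0∞) : ℝ :=
  (klFun P (fun a => (P a + Q a) / 2) + klFun Q (fun a => (P a + Q a) / 2)) / 2

/-- `privA μ A g` is the privacy of a binary classifier output `g` with respect to the
binary sensitive attribute `A`, `1 - |Pr(g = 1 | A = 1) - Pr(g = 1 | A = 0)|`. -/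
noncomputable def privA {Ω : Type*} [MeasurableSpace Ω] (μ : Measure Ω)
    (A : Ω → Bool) (g : Ω → Bool) : ℝ :=
  1 - |((ProbabilityTheory.cond μ {ω | A ω = true}) {ω | g ω = true}).toReal -
        ((ProbabilityTheory.cond μ {ω | A ω = false}) {ω | g ω = true}).toReal|

/-- Conditional error `Err_a(g) = E[|Y - g(X)| | A = a]` of a binary classifier. -/
noncomputable def errCond {Ω : Type*} [MeasurableSpace Ω] (μ : Measure Ω)
    (Y A : Ω → Bool) (g : Ω → Bool) (a : Bool) : ℝ :=
  ∫ ω, |(if Y ω then (1:ℝ) else 0) - (if g ω then (1:ℝ) else 0)|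
    ∂(ProbabilityTheory.cond μ {ω' | A ω' = a})

/-! The Jensen–Shannon divergence of two laws on a finite set is at most their `ℓ¹` distance
divided by `ln 2` (termwise, by `log x ≤ x - 1`), so for laws on `Bool` it is at most
`(2 / ln 2) |p₀ - p₁| ≤ 3 |p₀ - p₁|`, where `p_a = Pr(Y = 1 | A = a)`. With
`x_a = Pr(h ∘ f = 1 | A = a)` one has `|p_a - x_a| ≤ Err_a(h ∘ f)` and
`Priv_A(H ∘ f) ≤ Priv_A(h ∘ f) = 1 - |x₁ - x₀|`, so the triangle inequality
`|p₀ - p₁| ≤ |p₀ - x₀| + |x₀ - x₁| + |x₁ - p₁|` gives the trade-off. -/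

lemma mul_logb_div_midpoint_le {p q : ℝ} (hp : 0 ≤ p) (hq : 0 ≤ q) :
    p * Real.logb 2 (p / ((p + q) / 2)) ≤ |p - q| / Real.log 2 := by
  rcases hp.eq_or_lt with rfl | hp
  · simp only [zero_mul]
    positivity
  have hpq : 0 < p + q := by linarith
  rw [Real.logb, ← mul_div_assoc, div_le_div_iff_of_pos_right (Real.log_pos one_lt_two)]
  calc p * Real.log (p / ((p + q) / 2))
      ≤ p * (p / ((p + q) / 2) - 1) :=
        mul_le_mul_of_nonneg_left (Real.log_le_sub_one_of_pos (by positivity)) hp.le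
    _ = p / (p + q) * (p - q) := by field_simp; ring
    _ ≤ p / (p + q) * |p - q| := mul_le_mul_of_nonneg_left (le_abs_self _) (by positivity)
    _ ≤ |p - q| := mul_le_of_le_one_left (abs_nonneg _) ((div_le_one hpq).2 (by linarith))

theorem klFun_midpoint_le {α : Type*} [Fintype α] {P Q : α → ℝ≥0∞}
    (hP : ∀ a, P a ≠ ∞) (hQ : ∀ a, Q a ≠ ∞) :
    klFun P (fun a => (P a + Q a) / 2)
      ≤ (∑ a, |(P a).toReal - (Q a).toReal|) / Real.log 2 := by
  rw [klFun, tsum_fintype, Finset.sum_div]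
  refine Finset.sum_le_sum fun a _ => ?_
  rw [ENNReal.toReal_div, ENNReal.toReal_add (hP a) (hQ a), ENNReal.toReal_ofNat]
  exact mul_logb_div_midpoint_le ENNReal.toReal_nonneg ENNReal.toReal_nonneg

theorem jsFun_le_sum_abs_sub_div_log_two {α : Type*} [Fintype α] {P Q : α → ℝ≥0∞}
    (hP : ∀ a, P a ≠ ∞) (hQ : ∀ a, Q a ≠ ∞) :
    jsFun P Q ≤ (∑ a, |(P a).toReal - (Q a).toReal|) / Real.log 2 := by
  have hPQ := klFun_midpoint_le hP hQ
  have hQP := klFun_midpoint_le hQ hP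
  simp only [add_comm (Q _), abs_sub_comm (Q _).toReal] at hQP
  rw [jsFun]
  linarith

theorem jsFun_law_bool_le {Ω : Type*} [MeasurableSpace Ω] (ν₀ ν₁ : Measure Ω)
    [IsProbabilityMeasure ν₀] [IsProbabilityMeasure ν₁] {Y : Ω → Bool} (hY : Measurable Y) :
    jsFun (fun b => ν₀ {ω | Y ω = b}) (fun b => ν₁ {ω | Y ω = b})
      ≤ 3 * |(ν₀ {ω | Y ω = true}).toReal - (ν₁ {ω | Y ω = true}).toReal| := by
  have hfalse : ∀ (ν : Measure Ω) [IsProbabilityMeasure ν],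
      (ν {ω | Y ω = false}).toReal = 1 - (ν {ω | Y ω = true}).toReal := by
    intro ν _
    have hcompl : {ω | Y ω = false} = {ω | Y ω = true}ᶜ := by ext; simp
    rw [hcompl, ← measureReal_def]
    exact probReal_compl_eq_one_sub (hY (measurableSet_singleton true))
  have hjs := jsFun_le_sum_abs_sub_div_log_two (P := fun b => ν₀ {ω | Y ω = b})
    (Q := fun b => ν₁ {ω | Y ω = b}) (fun _ => measure_ne_top _ _) (fun _ => measure_ne_top _ _)
  rw [Fintype.sum_bool, hfalse ν₀, hfalse ν₁, sub_sub_sub_cancel_left,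
    abs_sub_comm (ν₁ _).toReal] at hjs
  have hlog : (2 : ℝ) / 3 < Real.log 2 := lt_trans (by norm_num) Real.log_two_gt_d9
  refine hjs.trans ?_
  rw [div_le_iff₀ (by positivity)]
  nlinarith [abs_nonneg ((ν₀ {ω | Y ω = true}).toReal - (ν₁ {ω | Y ω = true}).toReal)]

lemma abs_sub_le_integral_abs_sub_boole {Ω : Type*} [MeasurableSpace Ω] (ν : Measure Ω)
    [IsFiniteMeasure ν] {Y g : Ω → Bool} (hY : Measurable Y) (hg : Measurable g) :
    |(ν {ω | Y ω = true}).toReal - (ν {ω | g ω = true}).toReal|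
      ≤ ∫ ω, |(if Y ω then (1:ℝ) else 0) - (if g ω then (1:ℝ) else 0)| ∂ν := by
  have hint : ∀ Z : Ω → Bool, Measurable Z →
      Integrable (fun ω => if Z ω then (1:ℝ) else 0) ν ∧
      ∫ ω, (if Z ω then (1:ℝ) else 0) ∂ν = (ν {ω | Z ω = true}).toReal := by
    intro Z hZ
    have hs : MeasurableSet {ω | Z ω = true} := hZ (measurableSet_singleton true)
    have hind : (fun ω => if Z ω then (1:ℝ) else 0) = {ω | Z ω = true}.indicator 1 := by
      ext ω; simp [Set.indicator_apply]
    rw [hind]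
    exact ⟨(integrable_const (1:ℝ)).indicator hs, integral_indicator_one hs⟩
  obtain ⟨hYi, hYe⟩ := hint Y hY
  obtain ⟨hgi, hge⟩ := hint g hg
  rw [← hYe, ← hge, ← integral_sub hYi hgi]
  exact abs_integral_le_integral_abs

lemma privA_nonneg {Ω : Type*} [MeasurableSpace Ω] (μ : Measure Ω) (A g : Ω → Bool) :
    0 ≤ privA μ A g :=
  sub_nonneg.2 <| abs_sub_le_of_nonneg_of_le measureReal_nonneg measureReal_le_one
    measureReal_nonneg measureReal_le_one

theorem utility_privacy_tradeoff_general
    {Ω 𝒳 𝒵 : Type*} [MeasurableSpace Ω] [MeasurableSpace 𝒵]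
    [MeasurableSingletonClass 𝒵] [Countable 𝒵]
    (μ : Measure Ω) [IsProbabilityMeasure μ]
    (X : Ω → 𝒳) (Y A : Ω → Bool) (f : 𝒳 → 𝒵)
    (hY : Measurable Y) (hfX : Measurable (fun ω => f (X ω)))
    (hA0 : μ {ω | A ω = false} ≠ 0) (hA1 : μ {ω | A ω = true} ≠ 0) :
    ∀ h : 𝒵 → Bool,
      (1 - errCond μ Y A (fun ω => h (f (X ω))) false)
        + (1 - errCond μ Y A (fun ω => h (f (X ω))) true)
        + (⨅ g : 𝒵 → Bool, privA μ A (fun ω => g (f (X ω))))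
      ≤ 3 - (1/3) * jsFun
          (fun b => (ProbabilityTheory.cond μ {ω | A ω = false}) {ω | Y ω = b})
          (fun b => (ProbabilityTheory.cond μ {ω | A ω = true}) {ω | Y ω = b}) := by
  intro h
  have := cond_isProbabilityMeasure hA0
  have := cond_isProbabilityMeasure hA1
  have hg : Measurable fun ω => h (f (X ω)) := (measurable_of_countable h).comp hfX
  have herr₀ := abs_sub_le_integral_abs_sub_boole μ[|{ω | A ω = false}] hY hg
  have herr₁ := abs_sub_le_integral_abs_sub_boole μ[|{ω | A ω = true}] hY hg
  have hpriv : (⨅ g : 𝒵 → Bool, privA μ A (fun ω => g (f (X ω))))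
      ≤ privA μ A (fun ω => h (f (X ω))) :=
    ciInf_le ⟨0, by rintro _ ⟨g, rfl⟩; exact privA_nonneg μ A _⟩ h
  have hjs := jsFun_law_bool_le μ[|{ω | A ω = false}] μ[|{ω | A ω = true}] hY
  rw [errCond, errCond]
  rw [privA] at hpriv
  set p₀ := (μ[|{ω | A ω = false}] {ω | Y ω = true}).toReal
  set p₁ := (μ[|{ω | A ω = true}] {ω | Y ω = true}).toReal
  set x₀ := (μ[|{ω | A ω = false}] {ω | h (f (X ω)) = true}).toReal
  set x₁ := (μ[|{ω | A ω = true}] {ω | h (f (X ω)) = true}).toReal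
  linarith [abs_sub_le p₀ x₀ p₁, abs_sub_le x₀ x₁ p₁, abs_sub_comm x₀ x₁, abs_sub_comm x₁ p₁]

/-- utility–privacy trade-off: when `H` consists of all (measurable)
binary classifiers over `𝒵`, for every `h ∈ H`,
`Util₀(h∘f) + Util₁(h∘f) + Priv_A(H∘f) ≤ 3 - (1/3) D_JS(D₀^Y, D₁^Y)`. -/
theorem utility_privacy_tradeoff
    {Ω 𝒳 𝒵 : Type*} [MeasurableSpace Ω] [MeasurableSpace 𝒵]
    [MeasurableSingletonClass 𝒵] [Countable 𝒵]
    (μ : Measure Ω) [IsProbabilityMeasure μ]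
    (X : Ω → 𝒳) (Y A : Ω → Bool) (f : 𝒳 → 𝒵)
    (hY : Measurable Y) (hA : Measurable A) (hfX : Measurable (fun ω => f (X ω)))
    (hA0 : μ {ω | A ω = false} ≠ 0) (hA1 : μ {ω | A ω = true} ≠ 0) :
    ∀ h : 𝒵 → Bool,
      (1 - errCond μ Y A (fun ω => h (f (X ω))) false)
        + (1 - errCond μ Y A (fun ω => h (f (X ω))) true)
        + (⨅ g : 𝒵 → Bool, privA μ A (fun ω => g (f (X ω))))
      ≤ 3 - (1/3) * jsFun
          (fun b => (ProbabilityTheory.cond μ {ω | A ω = false}) {ω | Y ω = b})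
          (fun b => (ProbabilityTheory.cond μ {ω | A ω = true}) {ω | Y ω = b}) :=
  utility_privacy_tradeoff_general μ X Y A f hY hfX hA0 hA1
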